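/- Let a₁, …, aₙ ∈ ℂ with max_i |aᵢ| ≥ 4, and let F = P_{aₙ} ∘ ⋯ ∘ P_{a₁}. Then there exists c ∈ ℂ with F'(c) = 0 such that |F^k(c)| → ∞ as k → ∞; in particular F has a critical point whose forward orbit is unbounded, i.e., a critical point outside the filled-in Julia set K(F). -/
import Mathlib


/-- The map `P_{aₙ} ∘ ⋯ ∘ P_{a₁} : ℂ → ℂ`, where `P_a(z) = z² + a`.
Here `a i` plays the role of `a_{i+1}`, i.e. `P_{a₁}` is applied first. -/
def compQuadFun : (n : ℕ) → (Fin n → ℂ) → ℂ → ℂ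
  | 0, _ => id
  | n + 1, a => (fun z => z ^ 2 + a (Fin.last n)) ∘ compQuadFun n (a ∘ Fin.castSucc)

/-- The filled-in Julia set of `F : ℂ → ℂ`: points with bounded forward orbit. -/
def filledJulia (F : ℂ → ℂ) : Set ℂ := {z : ℂ | ∃ B : ℝ, ∀ k : ℕ, ‖F^[k] z‖ ≤ B}

namespace CQAux

/-- Apply the quadratics `P_b` for `b` in the list, left to right. -/
def compList : List ℂ → ℂ → ℂ
  | [], z => z
  | b :: t, z => compList t (z ^ 2 + b)

lemma compList_append (l₁ l₂ : List ℂ) (z : ℂ) :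
    compList (l₁ ++ l₂) z = compList l₂ (compList l₁ z) := by
  induction l₁ generalizing z with
  | nil => rfl
  | cons b t ih => simp [compList, ih]

lemma compQuadFun_eq (n : ℕ) (a : Fin n → ℂ) (z : ℂ) :
    compQuadFun n a z = compList (List.ofFn a) z := by
  induction n with
  | zero => rfl
  | succ n ih =>
      rw [List.ofFn_succ']
      simp only [compQuadFun, Function.comp_apply]
      rw [ih]
      simp [List.concat_eq_append, compList_append, compList]
      rfl

lemma compList_surj (l : List ℂ) : Function.Surjective (compList l) := by
  induction l with
  | nil => exact fun w => ⟨w, rfl⟩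
  | cons b t ih =>
      intro w
      obtain ⟨z', hz'⟩ := ih w
      obtain ⟨u, hu⟩ := IsAlgClosed.exists_pow_nat_eq (z' - b) (n := 2) (by norm_num)
      refine ⟨u, ?_⟩
      show compList t (u ^ 2 + b) = w
      rw [hu, sub_add_cancel, hz']

lemma compList_diff (l : List ℂ) : Differentiable ℂ (compList l) := by
  induction l with
  | nil => exact differentiable_id
  | cons b t ih =>
      have : compList (b :: t) = (compList t) ∘ (fun z => z ^ 2 + b) := rfl
      rw [this]
      exact ih.comp ((differentiable_pow 2).add_const b)

lemma growth (M : ℝ) (hM : 4 ≤ M) :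
    ∀ (L : List ℂ), (∀ b ∈ L, ‖b‖ ≤ M) → ∀ z : ℂ, M ≤ ‖z‖ →
      3 ^ L.length * ‖z‖ ≤ ‖compList L z‖ := by
  intro L
  induction L with
  | nil => intro _ z _; simp [compList]
  | cons b t ih =>
      intro hmem z hz
      have hb : ‖b‖ ≤ M := hmem b (by simp)
      have hnorm : ‖z‖ ^ 2 - ‖b‖ ≤ ‖z ^ 2 + b‖ := by
        have h1 : ‖z ^ 2‖ - ‖-b‖ ≤ ‖z ^ 2 - (-b)‖ := norm_sub_norm_le _ _
        simpa [norm_pow, sub_neg_eq_add] using h1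
      have h3z : 3 * ‖z‖ ≤ ‖z ^ 2 + b‖ := by nlinarith
      have hMz : M ≤ ‖z ^ 2 + b‖ := by nlinarith
      have ihz := ih (fun c hc => hmem c (by simp [hc])) (z ^ 2 + b) hMz
      have hlen : (3 : ℝ) ^ (b :: t).length = 3 ^ t.length * 3 := by
        simp [pow_succ]
      calc 3 ^ (b :: t).length * ‖z‖ = 3 ^ t.length * (3 * ‖z‖) := by rw [hlen]; ring
        _ ≤ 3 ^ t.length * ‖z ^ 2 + b‖ := by
            have : (0:ℝ) ≤ 3 ^ t.length := by positivity
            nlinarith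
        _ ≤ ‖compList t (z ^ 2 + b)‖ := ihz
        _ = ‖compList (b :: t) z‖ := rfl

end CQAux

open CQAux in
/-- If `max_i |aᵢ| ≥ 4` then `F = P_{aₙ} ∘ ⋯ ∘ P_{a₁}` has a critical point whose
forward orbit tends to infinity; in particular a critical point outside the
filled-in Julia set `K(F)`. -/
theorem compQuad_critical_escapes (n : ℕ) (hn : 1 ≤ n) (a : Fin n → ℂ)
    (h4 : ∃ i, 4 ≤ ‖a i‖) :
    ∃ c : ℂ, deriv (compQuadFun n a) c = 0 ∧
      Filter.Tendsto (fun k : ℕ => ‖(compQuadFun n a)^[k] c‖) Filter.atTop Filter.atTop ∧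
      c ∉ filledJulia (compQuadFun n a) := by
  classical
  obtain ⟨i₀, hi₀⟩ := h4
  obtain ⟨i, -, hi⟩ := Finset.exists_max_image Finset.univ (fun j => ‖a j‖)
    ⟨i₀, Finset.mem_univ _⟩
  set M : ℝ := ‖a i‖ with hMdef
  have hM4 : 4 ≤ M := le_trans hi₀ (hi i₀ (Finset.mem_univ _))
  set l : List ℂ := List.ofFn a with hl
  have hlen : l.length = n := by simp [hl]
  have hmem : ∀ b ∈ l, ‖b‖ ≤ M := by
    intro b hb
    rw [hl, List.mem_ofFn] at hb
    obtain ⟨j, rfl⟩ := hb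
    exact hi j (Finset.mem_univ _)
  have hiL : (i : ℕ) < l.length := by rw [hlen]; exact i.isLt
  have hdrop : l.drop i = a i :: l.drop ((i : ℕ) + 1) := by
    rw [List.drop_eq_getElem_cons hiL]
    congr 1
    simp [hl]
  have hsplit : l = l.take (i : ℕ) ++ a i :: l.drop ((i : ℕ) + 1) := by
    conv_lhs => rw [← List.take_append_drop (i : ℕ) l]
    rw [hdrop]
  set t₁ : List ℂ := l.take (i : ℕ) with ht₁
  set t₂ : List ℂ := l.drop ((i : ℕ) + 1) with ht₂
  have hmem₁ : ∀ b ∈ t₁, ‖b‖ ≤ M := fun b hb => hmem b (List.mem_of_mem_take hb)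
  have hmem₂ : ∀ b ∈ t₂, ‖b‖ ≤ M := fun b hb => hmem b (List.mem_of_mem_drop hb)
  have hF : ∀ z, compQuadFun n a z = compList t₂ ((compList t₁ z) ^ 2 + a i) := by
    intro z
    rw [compQuadFun_eq, ← hl]
    conv_lhs => rw [hsplit]
    rw [compList_append]
    rfl
  obtain ⟨c, hc⟩ := compList_surj t₁ 0
  -- derivative is zero at c
  have hderiv : deriv (compQuadFun n a) c = 0 := by
    have hFe : compQuadFun n a = fun z => compList t₂ ((compList t₁ z) ^ 2 + a i) :=
      funext hF
    rw [hFe]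
    have hd1 : HasDerivAt (compList t₁) (deriv (compList t₁) c) c :=
      ((compList_diff t₁).differentiableAt).hasDerivAt
    have h2 : HasDerivAt (fun z => (compList t₁ z) ^ 2 + a i)
        ((2 : ℕ) * (compList t₁ c) ^ 1 * deriv (compList t₁) c) c :=
      (hd1.pow 2).add_const (a i)
    rw [hc] at h2
    simp only [one_pow, zero_pow, mul_zero, zero_mul, pow_one] at h2
    have h3 : HasDerivAt (fun z => compList t₂ ((compList t₁ z) ^ 2 + a i))
        (deriv (compList t₂) ((compList t₁ c) ^ 2 + a i) * 0) c :=
      HasDerivAt.comp c ((compList_diff t₂).differentiableAt).hasDerivAt h2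
    rw [mul_zero] at h3
    exact h3.deriv
  -- orbit escape
  have hy : M ≤ ‖compQuadFun n a c‖ := by
    rw [hF c, hc]
    have h0 : (0 : ℂ) ^ 2 + a i = a i := by ring
    rw [h0]
    have := growth M hM4 t₂ hmem₂ (a i) (le_of_eq rfl)
    have h1 : (1 : ℝ) ≤ 3 ^ t₂.length := one_le_pow₀ (by norm_num)
    nlinarith
  have hstep : ∀ z : ℂ, M ≤ ‖z‖ →
      3 * ‖z‖ ≤ ‖compQuadFun n a z‖ ∧ M ≤ ‖compQuadFun n a z‖ := by
    intro z hz
    have hg := growth M hM4 l hmem z hz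
    rw [hlen] at hg
    have h3n : (3 : ℝ) ≤ 3 ^ n := by
      calc (3:ℝ) = 3 ^ 1 := (pow_one 3).symm
        _ ≤ 3 ^ n := pow_le_pow_right₀ (by norm_num) hn
    have hznn : (0:ℝ) ≤ ‖z‖ := norm_nonneg _
    have hFz : compQuadFun n a z = compList l z := by rw [compQuadFun_eq, ← hl]
    rw [hFz]
    constructor
    · nlinarith
    · nlinarith
  have horb : ∀ j : ℕ, M * 3 ^ j ≤ ‖(compQuadFun n a)^[j] (compQuadFun n a c)‖ := by
    intro j
    induction j with
    | zero => simpa using hy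
    | succ j ih =>
        have h3j : (1:ℝ) ≤ 3 ^ j := one_le_pow₀ (by norm_num)
        have hMle : M ≤ ‖(compQuadFun n a)^[j] (compQuadFun n a c)‖ := by nlinarith
        have := (hstep _ hMle).1
        rw [Function.iterate_succ_apply', pow_succ]
        nlinarith
  have htend : Filter.Tendsto (fun k : ℕ => ‖(compQuadFun n a)^[k] c‖)
      Filter.atTop Filter.atTop := by
    rw [← Filter.tendsto_add_atTop_iff_nat 1]
    have hlow : ∀ k : ℕ, (3:ℝ) ^ k ≤ ‖(compQuadFun n a)^[k + 1] c‖ := by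
      intro k
      rw [Function.iterate_succ_apply]
      have := horb k
      have h3j : (0:ℝ) ≤ 3 ^ k := by positivity
      nlinarith
    exact Filter.tendsto_atTop_mono hlow
      (tendsto_pow_atTop_atTop_of_one_lt (by norm_num : (1:ℝ) < 3))
  refine ⟨c, hderiv, htend, ?_⟩
  rintro ⟨B, hB⟩
  obtain ⟨k, hk⟩ := (htend.eventually_gt_atTop B).exists
  exact absurd (hB k) (not_le.mpr hk)
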